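/- arXiv:1612.03340 — 4 statements merged into one kernel-verified Lean document; each statement's English description precedes it below -/
import Mathlib

section
/- For all integers m ≥ 1 and n ≥ 1, (-1)^m · Σ_{k=0}^{m} C(m,k) · B_{n+k} = (-1)^n · Σ_{k=0}^{n} C(n,k) · B_{m+k}, where C(a,b) denotes the binomial coefficient. -/
/-!
Write `S a m n = ∑_{k ≤ m} C(m,k) a(n+k)` (`binomialShiftSum`), i.e. `((1 + E)^m a)(n)` for the
shift operator `E`.
Pascal's rule gives `S a (m+1) n = S a m n + S a m (n+1)`. If the boundary values satisfy
`S a n 0 = (-1)^n a n`, which for the Bernoulli numbers is their defining recursion (the odd ones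
beyond `B_1` vanish, and `n = 1` is checked by hand), then both
sides of `(-1)^m S a m n = (-1)^n S a n m` obey the same recursion in `m` and agree at `m = 0`,
so the symmetry follows by induction on `m`.
-/

open Finset

section BinomialShiftSum

variable {R : Type*} [CommRing R]

def binomialShiftSum (a : ℕ → R) (m n : ℕ) : R :=
  ∑ k ∈ range (m + 1), (m.choose k : R) * a (n + k)

theorem binomialShiftSum_zero_left (a : ℕ → R) (n : ℕ) : binomialShiftSum a 0 n = a n := by
  simp [binomialShiftSum]

theorem binomialShiftSum_succ_left (a : ℕ → R) (m n : ℕ) :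
    binomialShiftSum a (m + 1) n = binomialShiftSum a m n + binomialShiftSum a m (n + 1) := by
  have pascal := sum_choose_succ_mul (fun i _ => a (n + i)) m
  simp only [← add_assoc, add_right_comm n _ 1] at pascal
  exact pascal

theorem neg_one_pow_mul_binomialShiftSum_comm {a : ℕ → R}
    (ha : ∀ n, binomialShiftSum a n 0 = (-1) ^ n * a n) (m n : ℕ) :
    (-1) ^ m * binomialShiftSum a m n = (-1) ^ n * binomialShiftSum a n m := by
  induction m generalizing n with
  | zero =>
    rw [binomialShiftSum_zero_left, ha, ← mul_assoc, ← mul_pow]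
    simp
  | succ m ih =>
    have h := binomialShiftSum_succ_left a n m
    rw [binomialShiftSum_succ_left, pow_succ]
    linear_combination -ih n - ih (n + 1) + (-1) ^ n * h

end BinomialShiftSum

theorem sum_range_succ_choose_mul_bernoulli (n : ℕ) :
    ∑ k ∈ range (n + 1), (n.choose k : ℚ) * bernoulli k = (-1) ^ n * bernoulli n := by
  rw [sum_range_succ, sum_bernoulli, Nat.choose_self, Nat.cast_one, one_mul,
    ← bernoulli'_eq_bernoulli]
  by_cases h : n = 1
  · subst h
    norm_num
  · rw [if_neg h, zero_add, bernoulli_eq_bernoulli'_of_ne_one h]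

theorem carlitz_identity_general (m n : ℕ) :
    (-1 : ℚ) ^ m * ∑ k ∈ Finset.range (m + 1), (m.choose k : ℚ) * bernoulli (n + k) =
      (-1 : ℚ) ^ n * ∑ k ∈ Finset.range (n + 1), (n.choose k : ℚ) * bernoulli (m + k) :=
  neg_one_pow_mul_binomialShiftSum_comm
    (fun n => by simpa only [binomialShiftSum, zero_add] using sum_range_succ_choose_mul_bernoulli n)
    m n

/-- Carlitz's 1971 problem (Pearl 1): for `m, n ≥ 1`,
`(-1)^m * ∑_{k=0}^{m} C(m,k) B_{n+k} = (-1)^n * ∑_{k=0}^{n} C(n,k) B_{m+k}`. -/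
theorem carlitz_identity (m n : ℕ) (hm : 1 ≤ m) (hn : 1 ≤ n) :
    (-1 : ℚ) ^ m * ∑ k ∈ Finset.range (m + 1), (m.choose k : ℚ) * bernoulli (n + k) =
      (-1 : ℚ) ^ n * ∑ k ∈ Finset.range (n + 1), (n.choose k : ℚ) * bernoulli (m + k) :=
  carlitz_identity_general m n
end

section
/- Let P ∈ ℚ[X] be a polynomial, written P(X) = Σ_k a_k X^k, such that P(-1/2 + X) + P(-1/2 - X) = 0 as polynomials in ℚ[X]. Then Σ_k a_k · B_k = 0, where the sum ranges over all k with a_k the k-th coefficient of P. -/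
/-!
Let `L` be the linear functional on `ℚ[X]` with `L (X ^ n) = B_n`. Umbrally, `L ((X + t) ^ n)` is the
Bernoulli polynomial `B_n(t)`, so `L ((-1 - X) ^ n) = (-1) ^ n B_n(1) = (-1) ^ n B'_n = B_n`; that is,
`L` is invariant under the reflection `X ↦ -1 - X` about `-1/2`. A polynomial odd about `-1/2`
satisfies `P (-1 - X) = -P`, hence `L P = -L P`.
-/

open Polynomial

noncomputable def bernoulliUmbral : ℚ[X] →ₗ[ℚ] ℚ :=
  lsum fun k => LinearMap.toSpanSingleton ℚ ℚ (_root_.bernoulli k)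

namespace bernoulliUmbral

theorem apply (P : ℚ[X]) : bernoulliUmbral P = P.sum fun k a => a * _root_.bernoulli k := by
  simp [bernoulliUmbral, lsum_apply, LinearMap.toSpanSingleton_apply, smul_eq_mul]

theorem apply_eq_sum_range (P : ℚ[X]) :
    bernoulliUmbral P = ∑ k ∈ Finset.range (P.natDegree + 1), P.coeff k * _root_.bernoulli k :=
  (apply P).trans (sum_over_range P fun _ => zero_mul _)

@[simp]
theorem monomial (n : ℕ) (c : ℚ) : bernoulliUmbral (monomial n c) = c * _root_.bernoulli n := by
  simp [apply, sum_monomial_index]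

@[simp]
theorem X_pow (n : ℕ) : bernoulliUmbral (X ^ n) = _root_.bernoulli n := by
  simp [X_pow_eq_monomial]

theorem X_add_C_pow (n : ℕ) (t : ℚ) :
    bernoulliUmbral ((X + C t) ^ n) = (Polynomial.bernoulli n).eval t := by
  simp only [add_pow, map_sum, Polynomial.bernoulli, eval_finsetSum, eval_monomial]
  refine Finset.sum_congr rfl fun k _ => ?_
  rw [← C_pow, ← C_eq_natCast, mul_assoc, ← C_mul, mul_comm, ← smul_eq_C_mul, map_smul, X_pow,
    smul_eq_mul]
  ring

theorem neg_one_sub_X_pow (n : ℕ) : bernoulliUmbral ((-1 - X) ^ n) = _root_.bernoulli n := by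
  have hreflect : (-1 - X : ℚ[X]) ^ n = C ((-1) ^ n) * (X + C 1) ^ n := by
    rw [C_pow, C_neg, C_1, ← mul_pow]
    ring
  rw [hreflect, ← smul_eq_C_mul, map_smul, X_add_C_pow, bernoulli_eval_one, smul_eq_mul]
  rfl

theorem comp_neg_one_sub_X (P : ℚ[X]) : bernoulliUmbral (P.comp (-1 - X)) = bernoulliUmbral P := by
  induction P using Polynomial.induction_on' with
  | add p q hp hq => rw [add_comp, map_add, map_add, hp, hq]
  | monomial n c =>
    rw [monomial_comp, ← smul_eq_C_mul, map_smul, neg_one_sub_X_pow, smul_eq_mul, monomial]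

end bernoulliUmbral

theorem Polynomial.add_comp_reflect_eq_zero {R : Type*} [CommRing R] {P : R[X]} {a : R}
    (hP : P.comp (C a + X) + P.comp (C a - X) = 0) : P + P.comp (C (a + a) - X) = 0 := by
  have h := congrArg (fun Q : R[X] => Q.comp (X - C a)) hP
  simp only [add_comp, sub_comp, C_comp, X_comp, comp_assoc, zero_comp] at h
  rw [add_sub_cancel, comp_X] at h
  convert h using 3
  rw [C_add]
  ring

/-- If `P ∈ ℚ[X]` satisfies `P(-1/2 + X) + P(-1/2 - X) = 0`, then the umbral evaluation
`∑_k a_k B_k` of `P = ∑_k a_k X^k` at the Bernoulli numbers vanishes. -/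
theorem umbral_eval_vanishes (P : ℚ[X])
    (hP : P.comp (C (-1/2 : ℚ) + X) + P.comp (C (-1/2 : ℚ) - X) = 0) :
    ∑ k ∈ Finset.range (P.natDegree + 1), P.coeff k * _root_.bernoulli k = 0 := by
  have hodd : P + P.comp (-1 - X) = 0 := by
    simpa [show (-1/2 + -1/2 : ℚ) = -1 by norm_num] using add_comp_reflect_eq_zero hP
  have htwice : bernoulliUmbral P + bernoulliUmbral P = 0 := by
    simpa only [map_add, bernoulliUmbral.comp_neg_one_sub_X, map_zero] using
      congrArg bernoulliUmbral hodd
  rw [← bernoulliUmbral.apply_eq_sum_range]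
  linarith
end

section
/- For every integer n ≥ 1, Σ_{k=0}^{n} C(n,k) · B_k / (n + 2 - k) = B_{n+1} / (n+1), where the sum and the quotients are taken in ℚ and C(n,k) denotes the binomial coefficient. -/
/-!
Since `C(n,k) (n+1)(n+2) = C(n+2,k) (n+2-k)(n+1-k)` and `n+1-k = (n+2-k) - 1`, each term
`C(n,k) / (n+2-k)` equals `((n+2) C(n+1,k) - C(n+2,k)) / ((n+1)(n+2))`. The defining recurrence of
the Bernoulli numbers kills `∑ C(n+1,k) B_k` and reduces `∑_{k ≤ n} C(n+2,k) B_k` to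
`-(n+2) B_{n+1}`.
-/

open Finset

theorem Nat.cast_choose_mul_succ_sub {R : Type*} [CommRing R] {n k : ℕ} (hk : k ≤ n + 1) :
    ((n + 1).choose k : R) * ((n : R) + 1 - k) = n.choose k * ((n : R) + 1) := by
  have h := congrArg (Nat.cast : ℕ → R) (Nat.choose_mul_succ_eq n k)
  push_cast [Nat.cast_sub hk] at h
  exact h.symm

theorem Nat.cast_choose_div_add_two_sub {K : Type*} [Field K] [CharZero K] {n k : ℕ}
    (hk : k ≤ n) :
    (n.choose k : K) / ((n : K) + 2 - k) =
      (((n : K) + 2) * (n + 1).choose k - (n + 2).choose k) / (((n : K) + 1) * ((n : K) + 2)) := by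
  have h₁ : ((n : K) + 2 - k) ≠ 0 := by
    have : ((n + 2 - k : ℕ) : K) ≠ 0 := Nat.cast_ne_zero.mpr (by omega)
    rwa [Nat.cast_sub (by omega), Nat.cast_add, Nat.cast_two] at this
  have h₂ : ((n : K) + 1) * ((n : K) + 2) ≠ 0 := by
    have : (((n + 1) * (n + 2) : ℕ) : K) ≠ 0 := Nat.cast_ne_zero.mpr (by positivity)
    exact_mod_cast this
  have e₁ : ((n + 1).choose k : K) * ((n : K) + 1 - k) = n.choose k * ((n : K) + 1) :=
    Nat.cast_choose_mul_succ_sub (by omega)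
  have e₂ : ((n + 2).choose k : K) * ((n : K) + 2 - k) = (n + 1).choose k * ((n : K) + 2) := by
    have := Nat.cast_choose_mul_succ_sub (R := K) (n := n + 1) (k := k) (by omega)
    push_cast at this
    linear_combination this
  rw [div_eq_div_iff h₁ h₂]
  linear_combination e₂ - ((n : K) + 2) * e₁

theorem sum_range_choose_add_two_mul_bernoulli (n : ℕ) :
    ∑ k ∈ range (n + 1), ((n + 2).choose k : ℚ) * bernoulli k = -((n + 2) * bernoulli (n + 1)) := by
  have h := sum_bernoulli (n + 2)
  rw [sum_range_succ, if_neg (by omega), Nat.choose_succ_self_right] at h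
  push_cast at h
  linear_combination h

/-- Apostol's identity (Pearl 2): for `n ≥ 1`,
`∑_{k=0}^{n} C(n,k) B_k / (n + 2 - k) = B_{n+1} / (n+1)`. -/
theorem apostol_identity (n : ℕ) (hn : 1 ≤ n) :
    ∑ k ∈ Finset.range (n + 1), (n.choose k : ℚ) * bernoulli k / ((n : ℚ) + 2 - k) =
      bernoulli (n + 1) / ((n : ℚ) + 1) := by
  have hterm : ∀ k ∈ range (n + 1), (n.choose k : ℚ) * bernoulli k / ((n : ℚ) + 2 - k) =
      (((n : ℚ) + 2) * ((n + 1).choose k * bernoulli k) - (n + 2).choose k * bernoulli k) /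
        (((n : ℚ) + 1) * ((n : ℚ) + 2)) := fun k hk => by
    rw [mul_div_right_comm, Nat.cast_choose_div_add_two_sub (Nat.lt_succ_iff.mp (mem_range.mp hk))]
    ring
  have hvanish : ∑ k ∈ range (n + 1), ((n + 1).choose k : ℚ) * bernoulli k = 0 := by
    rw [sum_bernoulli, if_neg (by omega)]
  rw [sum_congr rfl hterm, ← sum_div, sum_sub_distrib, ← mul_sum, hvanish,
    sum_range_choose_add_two_mul_bernoulli]
  field_simp
  ring
end

section
/- For every integer n ≥ 0, the following identity of polynomials in ℚ[X] holds: Σ_{k=0}^{n+1} C(n+1,k) · ((1 - (-1)^{n+1-k})/2) · B_{n+1+k}(X) = (1/2) · (n+1) · X^n · (X-1)^n · (2X - 1). -/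
/-!
With `P_n = ½ X^{n+1} (X-1)^{n+1}`, the binomial theorem gives
`P_n(X+1) - P_n(X) = ∑_k C(n+1,k) ((1-(-1)^{n+1-k})/2) X^{n+1+k}`, and since
`B_m(X+1) - B_m(X) = (X^m)'`, the left-hand side `K_n` satisfies
`K_n(X+1) - K_n(X) = (P_n(X+1) - P_n(X))' = P_n'(X+1) - P_n'(X)`.
So `K_n - P_n'` is 1-periodic, hence constant, and it vanishes at `1/2`: only odd-index
Bernoulli polynomials occur in `K_n`, and `2X - 1` divides `P_n'`.
-/

open Polynomial Finset

namespace Polynomial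

section Periodic

variable {R : Type*} [CommRing R]

theorem eval_add_natCast_of_comp_one_add_X_eq_self {p : R[X]} (h : p.comp (1 + X) = p)
    (a : R) (m : ℕ) : p.eval (a + m) = p.eval a := by
  induction m with
  | zero => simp
  | succ m ih =>
    have h_shift := congrArg (eval (a + m)) h
    rw [eval_comp] at h_shift
    simp only [eval_add, eval_one, eval_X] at h_shift
    rw [Nat.cast_succ, ← add_assoc, add_comm _ 1, h_shift, ih]

theorem eq_zero_of_comp_one_add_X_eq_self [IsDomain R] [CharZero R] {p : R[X]}
    (h : p.comp (1 + X) = p) {a : R} (ha : p.IsRoot a) : p = 0 := by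
  refine eq_zero_of_infinite_isRoot p <|
    Set.infinite_of_injective_forall_mem (f := fun m : ℕ => a + m) ?_ fun m => ?_
  · exact fun i j hij => Nat.cast_injective (add_left_cancel hij)
  · simpa [IsRoot, eval_add_natCast_of_comp_one_add_X_eq_self h] using ha

end Periodic

theorem bernoulli_eval_one_half_of_odd {m : ℕ} (hm : Odd m) :
    (bernoulli m).eval (1 / 2 : ℚ) = 0 := by
  have h := bernoulli_eval_one_sub m (1 / 2)
  rw [hm.neg_one_pow] at h
  norm_num at h
  linarith

theorem bernoulli_comp_one_add_X_sub (m : ℕ) :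
    (bernoulli m).comp (1 + X) - bernoulli m = derivative (X ^ m) := by
  rw [bernoulli_comp_one_add_X, add_sub_cancel_left, derivative_X_pow, nsmul_eq_mul,
    C_eq_natCast]

theorem sum_C_mul_bernoulli_comp_one_add_X_sub {ι : Type*} (s : Finset ι) (a : ι → ℚ)
    (m : ι → ℕ) :
    (∑ i ∈ s, C (a i) * bernoulli (m i)).comp (1 + X) - ∑ i ∈ s, C (a i) * bernoulli (m i) =
      derivative (∑ i ∈ s, C (a i) * X ^ (m i)) := by
  simp only [sum_comp, mul_comp, C_comp, ← sum_sub_distrib, ← mul_sub,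
    bernoulli_comp_one_add_X_sub, derivative_sum, derivative_C_mul]

end Polynomial

noncomputable def P (n : ℕ) : ℚ[X] := C (1 / 2) * (X ^ (n + 1) * (X - 1) ^ (n + 1))

theorem derivative_P (n : ℕ) :
    derivative (P n) =
      C ((1 : ℚ) / 2) * C ((n : ℚ) + 1) * X ^ n * (X - 1) ^ n * (2 * X - 1) := by
  simp only [P, derivative_mul, derivative_pow, derivative_C, derivative_X, derivative_sub,
    derivative_one, Nat.add_sub_cancel, zero_mul, zero_add, mul_one, sub_zero]
  push_cast
  ring

theorem P_comp_one_add_X_sub (n : ℕ) :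
    (P n).comp (1 + X) - P n = ∑ k ∈ range (n + 2),
      C (((n + 1).choose k : ℚ) * ((1 - (-1 : ℚ) ^ (n + 1 - k)) / 2)) * X ^ (n + 1 + k) := by
  have h_add : ((1 : ℚ[X]) + X) ^ (n + 1) =
      ∑ k ∈ range (n + 2), ((n + 1).choose k : ℚ[X]) * X ^ k := by
    rw [add_comm, add_pow]
    exact sum_congr rfl fun k _ => by ring
  have h_sub : ((X : ℚ[X]) - 1) ^ (n + 1) =
      ∑ k ∈ range (n + 2), ((n + 1).choose k : ℚ[X]) * (-1) ^ (n + 1 - k) * X ^ k := by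
    rw [sub_eq_add_neg, add_pow]
    exact sum_congr rfl fun k _ => by ring
  simp only [P, mul_comp, C_comp, pow_comp, X_comp, sub_comp, one_comp, add_sub_cancel_left]
  rw [h_add, h_sub, sum_mul, mul_sum, mul_sum, mul_sum, ← sum_sub_distrib]
  refine sum_congr rfl fun k _ => ?_
  simp only [div_eq_inv_mul, map_mul, map_sub, map_one, map_pow, map_neg, map_natCast]
  ring

/-- Theorem 1 of the paper: `K_n(X) = H_n(X)`, i.e.
`∑_{k=0}^{n+1} C(n+1,k) ((1-(-1)^{n+1-k})/2) B_{n+1+k}(X)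
  = (1/2)(n+1) X^n (X-1)^n (2X-1)` in `ℚ[X]`. -/
theorem K_eq_H (n : ℕ) :
    ∑ k ∈ Finset.range (n + 2),
        C (((n + 1).choose k : ℚ) * ((1 - (-1 : ℚ) ^ (n + 1 - k)) / 2)) *
          Polynomial.bernoulli (n + 1 + k) =
      C ((1 : ℚ) / 2) * C ((n : ℚ) + 1) * X ^ n * (X - 1) ^ n * (2 * X - 1) := by
  set c : ℕ → ℚ := fun k => ((n + 1).choose k : ℚ) * ((1 - (-1 : ℚ) ^ (n + 1 - k)) / 2)
  set K := ∑ k ∈ range (n + 2), C (c k) * Polynomial.bernoulli (n + 1 + k)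
  rw [← derivative_P]
  have h_periodic : (K - derivative (P n)).comp (1 + X) = K - derivative (P n) := by
    have h_diff := sum_C_mul_bernoulli_comp_one_add_X_sub (range (n + 2)) c (fun k => n + 1 + k)
    rw [← P_comp_one_add_X_sub, derivative_sub, derivative_comp, derivative_add, derivative_one,
      derivative_X, zero_add, one_mul] at h_diff
    rw [sub_comp]
    linear_combination h_diff
  have h_half : (K - derivative (P n)).IsRoot (1 / 2) := by
    have hK : K.eval (1 / 2) = 0 := by
      refine (eval_finsetSum _ _ _).trans <| sum_eq_zero fun k hk => ?_
      rw [eval_mul, eval_C]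
      rcases Nat.even_or_odd (n + 1 - k) with h_even | ⟨j, hj⟩
      · simp [c, h_even.neg_one_pow]
      · have hk := mem_range.mp hk
        rw [bernoulli_eval_one_half_of_odd ⟨j + k, by omega⟩, mul_zero]
    rw [IsRoot, eval_sub, hK, derivative_P]
    simp
  exact sub_eq_zero.mp (eq_zero_of_comp_one_add_X_eq_self h_periodic h_half)
end
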